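/- Define G : ℝ^3 × ℝ^{3×3} → ℝ^{3×3} by G(h,S) := S^T F_S(h,S), where F_S(h,S) := k1·(tr S)·I + 2k2·S_skw + k3·|h|^2·(tr S)·I + k4·(h·c(S))·[h]_× + 4k5·(S_skw h ⊗ h)_skw. Then the (componentwise) transform of G satisfies, for all h̃ ∈ ℝ^3 with |h̃| < 1 and all 3×3 matrices S̃ with |S̃| < 1: G̃(h̃,S̃) = S̃^T F_S(h̃,S̃) − |h̃|^2·( k1·(tr S̃)·S̃^T + 2k2·S̃^T S̃_skw ). (Second part of Remark 3.3 of the paper: only the terms of F_S that are linear in S and independent of h are modified by the transform.) -/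
import Mathlib


open Matrix

/-- The skew-symmetric matrix `[h]ₓ` associated to `h ∈ ℝ³`. -/
def hatVec (h : Fin 3 → ℝ) : Matrix (Fin 3) (Fin 3) ℝ :=
  !![0, -h 2, h 1; h 2, 0, -h 0; -h 1, h 0, 0]

/-- The axial vector `c(S) = (S₃₂ − S₂₃, S₁₃ − S₃₁, S₂₁ − S₁₂)` of a `3 × 3` matrix. -/
def axVec (S : Matrix (Fin 3) (Fin 3) ℝ) : Fin 3 → ℝ :=
  ![S 2 1 - S 1 2, S 0 2 - S 2 0, S 1 0 - S 0 1]

/-- The skew-symmetric part `M_skw = (M − Mᵀ)/2` of a matrix. -/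
noncomputable def skw (M : Matrix (Fin 3) (Fin 3) ℝ) : Matrix (Fin 3) (Fin 3) ℝ :=
  ((2 : ℝ)⁻¹) • (M - Mᵀ)

/-- Euclidean norm of a vector in `ℝ³`. -/
noncomputable def vnorm (v : Fin 3 → ℝ) : ℝ := Real.sqrt (∑ i, (v i) ^ 2)

/-- Frobenius norm of a real `3 × 3` matrix. -/
noncomputable def mnorm (S : Matrix (Fin 3) (Fin 3) ℝ) : ℝ :=
  Real.sqrt (∑ i, ∑ j, (S i j) ^ 2)

/-- The derivative `F_S(h,S)` of the Oseen–Frank density with respect to the gradient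
variable: `F_S(h,S) = k1 (tr S) I + 2 k2 S_skw + k3 |h|² (tr S) I + k4 (h·c(S)) [h]ₓ
  + 4 k5 (S_skw h ⊗ h)_skw`. -/
noncomputable def FS (k1 k2 k3 k4 k5 : ℝ) (h : Fin 3 → ℝ)
    (S : Matrix (Fin 3) (Fin 3) ℝ) : Matrix (Fin 3) (Fin 3) ℝ :=
  (k1 * S.trace) • (1 : Matrix (Fin 3) (Fin 3) ℝ) + (2 * k2) • skw S
    + (k3 * (h ⬝ᵥ h) * S.trace) • (1 : Matrix (Fin 3) (Fin 3) ℝ)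
    + (k4 * (h ⬝ᵥ axVec S)) • hatVec h
    + (4 * k5) • skw (vecMulVec ((skw S) *ᵥ h) h)

/-- The componentwise DiPerna–Majda transform of a matrix-valued function of `(h,S)`:
`f̃(h̃,S̃) = (1−|h̃|²)(1−|S̃|²) · f( h̃/√(1−|h̃|²), S̃/√(1−|S̃|²) )`. -/
noncomputable def mtransform
    (f : (Fin 3 → ℝ) → Matrix (Fin 3) (Fin 3) ℝ → Matrix (Fin 3) (Fin 3) ℝ)
    (h : Fin 3 → ℝ) (S : Matrix (Fin 3) (Fin 3) ℝ) : Matrix (Fin 3) (Fin 3) ℝ :=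
  ((1 - vnorm h ^ 2) * (1 - mnorm S ^ 2)) •
    f ((Real.sqrt (1 - vnorm h ^ 2))⁻¹ • h) ((Real.sqrt (1 - mnorm S ^ 2))⁻¹ • S)

lemma skw_smul (c : ℝ) (M : Matrix (Fin 3) (Fin 3) ℝ) : skw (c • M) = c • skw M := by
  simp [skw, smul_sub, smul_smul, mul_comm]

lemma axVec_smul (c : ℝ) (S : Matrix (Fin 3) (Fin 3) ℝ) :
    axVec (c • S) = c • axVec S := by
  funext i
  fin_cases i <;> simp [axVec, mul_sub]

lemma hatVec_smul (c : ℝ) (h : Fin 3 → ℝ) : hatVec (c • h) = c • hatVec h := by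
  ext i j
  fin_cases i <;> fin_cases j <;> simp [hatVec]

lemma vecMulVec_smul_left (c : ℝ) (u v : Fin 3 → ℝ) :
    vecMulVec (c • u) v = c • vecMulVec u v := by
  ext i j; simp [vecMulVec, mul_assoc]

lemma vecMulVec_smul_right (c : ℝ) (u v : Fin 3 → ℝ) :
    vecMulVec u (c • v) = c • vecMulVec u v := by
  ext i j; simp [vecMulVec]; ring

lemma FS_scale (k1 k2 k3 k4 k5 α β : ℝ) (h : Fin 3 → ℝ)
    (S : Matrix (Fin 3) (Fin 3) ℝ) :
    FS k1 k2 k3 k4 k5 (α • h) (β • S)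
      = β • ((k1 * S.trace) • (1 : Matrix (Fin 3) (Fin 3) ℝ) + (2 * k2) • skw S)
        + (α ^ 2 * β) •
          ((k3 * (h ⬝ᵥ h) * S.trace) • (1 : Matrix (Fin 3) (Fin 3) ℝ)
            + (k4 * (h ⬝ᵥ axVec S)) • hatVec h
            + (4 * k5) • skw (vecMulVec ((skw S) *ᵥ h) h)) := by
  rw [FS]
  simp only [trace_smul, skw_smul, axVec_smul, hatVec_smul, smul_dotProduct,
    dotProduct_smul, smul_mulVec, Matrix.mulVec_smul, vecMulVec_smul_left,
    vecMulVec_smul_right, smul_eq_mul, smul_smul]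
  module

/-- **Second part of Remark 3.3 of the paper**: for `G(h,S) = Sᵀ F_S(h,S)`, the
transform satisfies, on the open unit balls,
`G̃(h̃,S̃) = S̃ᵀ F_S(h̃,S̃) − |h̃|² ( k1 (tr S̃) S̃ᵀ + 2 k2 S̃ᵀ S̃_skw )`. -/
theorem transform_of_Ericksen_stress (k1 k2 k3 k4 k5 : ℝ)
    (hk1 : 0 < k1) (hk2 : 0 < k2) (hk3 : 0 < k3) (hk4 : 0 < k4) (hk5 : 0 < k5)
    (G : (Fin 3 → ℝ) → Matrix (Fin 3) (Fin 3) ℝ → Matrix (Fin 3) (Fin 3) ℝ)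
    (hG : ∀ h S, G h S = Sᵀ * FS k1 k2 k3 k4 k5 h S) :
    ∀ (h : Fin 3 → ℝ) (S : Matrix (Fin 3) (Fin 3) ℝ), vnorm h < 1 → mnorm S < 1 →
      mtransform G h S
        = Sᵀ * FS k1 k2 k3 k4 k5 h S
          - (vnorm h ^ 2) • ((k1 * S.trace) • Sᵀ + (2 * k2) • (Sᵀ * skw S)) := by
  intro h S hh hS
  have hvn : 0 ≤ vnorm h := Real.sqrt_nonneg _
  have hmn : 0 ≤ mnorm S := Real.sqrt_nonneg _
  have ha2 : Real.sqrt (1 - vnorm h ^ 2) ^ 2 = 1 - vnorm h ^ 2 :=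
    Real.sq_sqrt (by nlinarith)
  have hb2 : Real.sqrt (1 - mnorm S ^ 2) ^ 2 = 1 - mnorm S ^ 2 :=
    Real.sq_sqrt (by nlinarith)
  set a := Real.sqrt (1 - vnorm h ^ 2) with haa
  set b := Real.sqrt (1 - mnorm S ^ 2) with hbb
  have ha0 : a ≠ 0 := ne_of_gt (Real.sqrt_pos.mpr (by nlinarith))
  have hb0 : b ≠ 0 := ne_of_gt (Real.sqrt_pos.mpr (by nlinarith))
  have hvh : vnorm h ^ 2 = 1 - a ^ 2 := by linarith
  have hms : mnorm S ^ 2 = 1 - b ^ 2 := by linarith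
  rw [mtransform, hG, ← haa, ← hbb, hvh, hms, transpose_smul, FS_scale]
  set P : Matrix (Fin 3) (Fin 3) ℝ :=
    (k1 * S.trace) • (1 : Matrix (Fin 3) (Fin 3) ℝ) + (2 * k2) • skw S with hP
  set Q : Matrix (Fin 3) (Fin 3) ℝ :=
    (k3 * (h ⬝ᵥ h) * S.trace) • (1 : Matrix (Fin 3) (Fin 3) ℝ)
      + (k4 * (h ⬝ᵥ axVec S)) • hatVec h
      + (4 * k5) • skw (vecMulVec ((skw S) *ᵥ h) h) with hQ
  have hFS : FS k1 k2 k3 k4 k5 h S = P + Q := by rw [FS, hP, hQ]; abel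
  have hSP : (k1 * S.trace) • Sᵀ + (2 * k2) • (Sᵀ * skw S) = Sᵀ * P := by
    rw [hP, Matrix.mul_add, Matrix.mul_smul, Matrix.mul_smul, Matrix.mul_one]
  rw [hFS, hSP]
  simp only [Matrix.smul_mul, Matrix.mul_add, Matrix.mul_smul, smul_add, smul_smul]
  match_scalars <;> field_simp <;> ring
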